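/- arXiv:1106.0290 — 4 statements merged into one kernel-verified Lean document; each statement's English description precedes it below -/
import Mathlib

section
/- Let a, c ∈ ℤ^d with ‖c-a‖_2^2 in [μ/4 - 2d, μ/4 + 2d], where μ = d(r^2-1)/6. Then every lattice point b ∈ ℤ^d satisfying both ‖b-c‖_2^2 ∈ [μ/4 - 2d, μ/4 + 2d] and ‖b-a‖_2^2 ∈ [μ - d, μ + d] has the form b = a + 2(c-a) + w with ∑_i w_i^2 ≤ 9d. Consequently (for even d ≥ 2) the number of such b is less than 15^d. -/
/-!
With `x = b - c` and `y = c - a`, the parallelogram law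
`‖x - y‖² = 2‖x‖² + 2‖y‖² - ‖x + y‖²` bounds `‖(b - a) - 2(c - a)‖²` by
`2(μ/4 + 2d) + 2(μ/4 + 2d) - (μ - d) = 9d`, whatever `μ` is.

Lattice points with `‖w‖² ≤ 9d` are counted by Rankin's trick: for `0 < x ≤ 1` their number is
at most `x^(-9d) θ(x)^d` with `θ(x) = ∑_k x^(k²)`, and `θ(9/10) < 15 (9/10)^9`.
-/

open Finset

lemma sum_sub_sub_two_mul_sq {ι R : Type*} [CommRing R] (s : Finset ι) (a b c : ι → R) :
    ∑ i ∈ s, (b i - a i - 2 * (c i - a i)) ^ 2 =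
      2 * ∑ i ∈ s, (b i - c i) ^ 2 + 2 * ∑ i ∈ s, (c i - a i) ^ 2 - ∑ i ∈ s, (b i - a i) ^ 2 := by
  simp only [mul_sum, ← sum_add_distrib, ← sum_sub_distrib]
  exact sum_congr rfl fun i _ => by ring

lemma pow_mul_card_filter_le_sum_pow {α : Type*} (s : Finset α) (f : α → ℕ) (N : ℕ) {x : ℝ}
    (hx0 : 0 ≤ x) (hx1 : x ≤ 1) :
    x ^ N * #{a ∈ s | f a ≤ N} ≤ ∑ a ∈ s, x ^ f a := by
  calc x ^ N * #{a ∈ s | f a ≤ N} = ∑ a ∈ s with f a ≤ N, x ^ N := by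
        rw [sum_const, nsmul_eq_mul, mul_comm]
    _ ≤ ∑ a ∈ s with f a ≤ N, x ^ f a :=
        sum_le_sum fun a ha => pow_le_pow_of_le_one hx0 hx1 (mem_filter.1 ha).2
    _ ≤ ∑ a ∈ s, x ^ f a :=
        sum_le_sum_of_subset_of_nonneg (filter_subset _ _) fun a _ _ => pow_nonneg hx0 _

lemma sum_piFinset_pow_sum {ι α : Type*} [Fintype ι] [DecidableEq ι] (t : Finset α) (g : α → ℕ)
    (x : ℝ) :
    ∑ w ∈ Fintype.piFinset fun _ : ι => t, x ^ ∑ i, g (w i) =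
      (∑ k ∈ t, x ^ g k) ^ Fintype.card ι := by
  rw [← card_univ, ← prod_const, prod_univ_sum]
  exact sum_congr rfl fun w _ => (prod_pow_eq_pow_sum _ _ _).symm

noncomputable def thetaPartialSum (x : ℝ) (n : ℕ) : ℝ :=
  ∑ k ∈ Icc (-n : ℤ) n, x ^ (k.natAbs ^ 2)

lemma thetaPartialSum_eq (x : ℝ) (n : ℕ) :
    thetaPartialSum x n = 1 + 2 * ∑ m ∈ range n, x ^ ((m + 1) ^ 2) := by
  induction n with
  | zero => simp [thetaPartialSum]
  | succ n ih =>
    have hIcc : Icc (-(n + 1 : ℕ) : ℤ) (n + 1 : ℕ) =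
        insert (-(n + 1 : ℤ)) (insert (n + 1 : ℤ) (Icc (-n : ℤ) n)) := by
      ext k; simp only [mem_Icc, mem_insert]; push_cast; omega
    rw [thetaPartialSum, hIcc, sum_insert (by simp; omega), sum_insert (by simp),
      ← thetaPartialSum, ih, sum_range_succ]
    have h1 : (-(n + 1 : ℤ)).natAbs = n + 1 := by omega
    have h2 : (n + 1 : ℤ).natAbs = n + 1 := by omega
    rw [h1, h2]; ring

lemma thetaPartialSum_le {x : ℝ} (hx0 : 0 ≤ x) (hx1 : x < 1) (n : ℕ) :
    thetaPartialSum x (n + 2) ≤ 1 + 2 * x + 2 * x ^ 4 + 2 * x ^ 9 / (1 - x ^ 7) := by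
  have hx7 : x ^ 7 < 1 := pow_lt_one₀ hx0 hx1 (by norm_num)
  -- `(m + 3) ^ 2 ≥ 9 + 7 m`: beyond the central terms the series is dominated by a geometric one.
  have htail : ∑ m ∈ range n, x ^ ((m + 1 + 1 + 1) ^ 2) ≤ x ^ 9 / (1 - x ^ 7) := by
    calc ∑ m ∈ range n, x ^ ((m + 1 + 1 + 1) ^ 2) ≤ ∑ m ∈ range n, x ^ 9 * (x ^ 7) ^ m :=
          sum_le_sum fun m _ => by
            rw [← pow_mul, ← pow_add]
            exact pow_le_pow_of_le_one hx0 hx1.le (by nlinarith [Nat.le_self_pow two_ne_zero m])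
      _ = x ^ 9 * ∑ m ∈ Ico 0 n, (x ^ 7) ^ m := by rw [← mul_sum, range_eq_Ico]
      _ ≤ x ^ 9 * ((x ^ 7) ^ 0 / (1 - x ^ 7)) :=
          mul_le_mul_of_nonneg_left (geom_sum_Ico_le_of_lt_one (by positivity) hx7)
            (by positivity)
      _ = x ^ 9 / (1 - x ^ 7) := by ring
  rw [thetaPartialSum_eq, sum_range_succ', sum_range_succ']
  norm_num only [zero_add, one_add_one_eq_two, pow_one, mul_div_assoc]
  linarith

lemma sum_sq_le_subset_piFinset {d N n : ℕ} (hN : N ≤ n ^ 2) :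
    {w : Fin d → ℤ | ∑ i, w i ^ 2 ≤ N} ⊆
      ↑({w ∈ Fintype.piFinset fun _ : Fin d => Icc (-n : ℤ) n | ∑ i, (w i).natAbs ^ 2 ≤ N}) := by
  intro w hw
  have hsum : ∑ i, w i ^ 2 = ((∑ i, (w i).natAbs ^ 2 : ℕ) : ℤ) := by
    push_cast [Int.natCast_natAbs, sq_abs]; rfl
  rw [Set.mem_ofPred_eq, hsum, Nat.cast_le] at hw
  refine mem_filter.2 ⟨Fintype.mem_piFinset.2 fun i => mem_Icc.2 ?_, hw⟩
  have hi : (w i).natAbs ^ 2 ≤ n ^ 2 :=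
    (single_le_sum (fun j _ => Nat.zero_le ((w j).natAbs ^ 2)) (mem_univ i)).trans (hw.trans hN)
  have := Nat.pow_le_pow_iff_left two_ne_zero |>.1 hi
  omega

lemma finite_setOf_sum_sq_le (d N : ℕ) : {w : Fin d → ℤ | ∑ i, w i ^ 2 ≤ N}.Finite :=
  (finite_toSet _).subset (sum_sq_le_subset_piFinset (Nat.le_self_pow two_ne_zero N))

lemma pow_mul_ncard_sum_sq_le {d N n : ℕ} (hN : N ≤ n ^ 2) {x : ℝ} (hx0 : 0 ≤ x) (hx1 : x ≤ 1) :
    x ^ N * {w : Fin d → ℤ | ∑ i, w i ^ 2 ≤ N}.ncard ≤ thetaPartialSum x n ^ d := by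
  have hcard := Set.ncard_le_ncard (sum_sq_le_subset_piFinset (d := d) hN) (finite_toSet _)
  rw [Set.ncard_coe_finset] at hcard
  calc x ^ N * {w : Fin d → ℤ | ∑ i, w i ^ 2 ≤ N}.ncard
      ≤ x ^ N * #{w ∈ Fintype.piFinset fun _ : Fin d => Icc (-n : ℤ) n |
          ∑ i, (w i).natAbs ^ 2 ≤ N} := by gcongr
    _ ≤ ∑ w ∈ Fintype.piFinset fun _ : Fin d => Icc (-n : ℤ) n, x ^ ∑ i, (w i).natAbs ^ 2 :=
        pow_mul_card_filter_le_sum_pow (f := fun w : Fin d → ℤ => ∑ i, (w i).natAbs ^ 2) _ _ hx0 hx1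
    _ = thetaPartialSum x n ^ d := by
        rw [sum_piFinset_pow_sum _ (fun k : ℤ => k.natAbs ^ 2), Fintype.card_fin, thetaPartialSum]

lemma ncard_sum_sq_le_nine_mul_lt {d : ℕ} (hd : d ≠ 0) :
    {w : Fin d → ℤ | ∑ i, w i ^ 2 ≤ 9 * d}.ncard < 15 ^ d := by
  set x : ℝ := 9 / 10
  have hθ : thetaPartialSum x (3 * d + 2) < 15 * x ^ 9 :=
    (thetaPartialSum_le (by norm_num) (by norm_num) _).trans_lt (by norm_num [x])
  have hcount := pow_mul_ncard_sum_sq_le (d := d) (N := 9 * d) (n := 3 * d + 2) (by nlinarith)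
    (x := x) (by norm_num) (by norm_num)
  push_cast at hcount
  have : x ^ (9 * d) * {w : Fin d → ℤ | ∑ i, w i ^ 2 ≤ 9 * d}.ncard < x ^ (9 * d) * 15 ^ d :=
    calc _ ≤ thetaPartialSum x (3 * d + 2) ^ d := hcount
      _ < (15 * x ^ 9) ^ d := pow_lt_pow_left₀ hθ (by unfold thetaPartialSum; positivity) hd
      _ = x ^ (9 * d) * 15 ^ d := by rw [mul_pow, ← pow_mul, mul_comm]
  exact_mod_cast lt_of_mul_lt_mul_left this (by positivity)

lemma sum_sq_sub_sub_two_mul_le {ι : Type*} (s : Finset ι) (a b c : ι → ℤ) {μ δ : ℝ}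
    (hac : ∑ i ∈ s, ((c i : ℝ) - a i) ^ 2 ≤ μ / 4 + 2 * δ)
    (hbc : ∑ i ∈ s, ((b i : ℝ) - c i) ^ 2 ≤ μ / 4 + 2 * δ)
    (hba : μ - δ ≤ ∑ i ∈ s, ((b i : ℝ) - a i) ^ 2) :
    ((∑ i ∈ s, (b i - a i - 2 * (c i - a i)) ^ 2 : ℤ) : ℝ) ≤ 9 * δ := by
  push_cast
  rw [sum_sub_sub_two_mul_sq]
  linarith

theorem few_third_vertices_AC_general (d : ℕ) (hd : 2 ≤ d) (μ : ℝ) (a c : Fin d → ℤ)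
    (hac : μ / 4 - 2 * d ≤ (∑ i, ((c i : ℝ) - a i) ^ 2) ∧
           (∑ i, ((c i : ℝ) - a i) ^ 2) ≤ μ / 4 + 2 * d) :
    (∀ b : Fin d → ℤ,
        (μ / 4 - 2 * d ≤ (∑ i, ((b i : ℝ) - c i) ^ 2) ∧
          (∑ i, ((b i : ℝ) - c i) ^ 2) ≤ μ / 4 + 2 * d) →
        (μ - d ≤ (∑ i, ((b i : ℝ) - a i) ^ 2) ∧
          (∑ i, ((b i : ℝ) - a i) ^ 2) ≤ μ + d) →
        ∃ w : Fin d → ℤ, (∀ i, b i = a i + 2 * (c i - a i) + w i) ∧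
          (∑ i, (w i) ^ 2) ≤ 9 * d) ∧
    {b : Fin d → ℤ |
        (μ / 4 - 2 * d ≤ (∑ i, ((b i : ℝ) - c i) ^ 2) ∧
          (∑ i, ((b i : ℝ) - c i) ^ 2) ≤ μ / 4 + 2 * d) ∧
        (μ - d ≤ (∑ i, ((b i : ℝ) - a i) ^ 2) ∧
          (∑ i, ((b i : ℝ) - a i) ^ 2) ≤ μ + d)}.ncard < 15 ^ d := by
  set w : (Fin d → ℤ) → Fin d → ℤ := fun b i => b i - a i - 2 * (c i - a i)
  have hw : ∀ b : Fin d → ℤ, (∑ i, ((b i : ℝ) - c i) ^ 2) ≤ μ / 4 + 2 * d →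
      μ - d ≤ (∑ i, ((b i : ℝ) - a i) ^ 2) → ∑ i, w b i ^ 2 ≤ 9 * d := fun b hbc hba => by
    exact_mod_cast sum_sq_sub_sub_two_mul_le univ a b c hac.2 hbc hba
  refine ⟨fun b hbc hba => ⟨w b, fun i => by ring, hw b hbc.2 hba.1⟩, ?_⟩
  calc _ ≤ {w : Fin d → ℤ | ∑ i, w i ^ 2 ≤ 9 * d}.ncard :=
        Set.ncard_le_ncard_of_injOn w (fun b hb => hw b hb.1.2 hb.2.1)
          (fun b _ b' _ h => funext fun i => by simpa [w] using congrFun h i)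
          (by exact_mod_cast finite_setOf_sum_sq_le d (9 * d))
    _ < 15 ^ d := ncard_sum_sq_le_nine_mul_lt (by omega)

/-- Let `a, c ∈ ℤ^d` with `‖c-a‖₂² ∈ [μ/4 - 2d, μ/4 + 2d]` where `μ = d(r²-1)/6`.
Every `b ∈ ℤ^d` with `‖b-c‖₂² ∈ [μ/4 - 2d, μ/4 + 2d]` and `‖b-a‖₂² ∈ [μ - d, μ + d]`
has the form `b = a + 2(c-a) + w` with `∑ w_i² ≤ 9d`; consequently (for even `d ≥ 2`)
the number of such `b` is less than `15^d`. -/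
theorem few_third_vertices_AC (r d : ℕ) (hr : 0 < r) (hd : 2 ≤ d) (hde : Even d)
    (μ : ℝ) (hμ : μ = d * ((r : ℝ) ^ 2 - 1) / 6)
    (a c : Fin d → ℤ)
    (hac : μ / 4 - 2 * d ≤ (∑ i, ((c i : ℝ) - a i) ^ 2) ∧
           (∑ i, ((c i : ℝ) - a i) ^ 2) ≤ μ / 4 + 2 * d) :
    (∀ b : Fin d → ℤ,
        (μ / 4 - 2 * d ≤ (∑ i, ((b i : ℝ) - c i) ^ 2) ∧
          (∑ i, ((b i : ℝ) - c i) ^ 2) ≤ μ / 4 + 2 * d) →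
        (μ - d ≤ (∑ i, ((b i : ℝ) - a i) ^ 2) ∧
          (∑ i, ((b i : ℝ) - a i) ^ 2) ≤ μ + d) →
        ∃ w : Fin d → ℤ, (∀ i, b i = a i + 2 * (c i - a i) + w i) ∧
          (∑ i, (w i) ^ 2) ≤ 9 * d) ∧
    {b : Fin d → ℤ |
        (μ / 4 - 2 * d ≤ (∑ i, ((b i : ℝ) - c i) ^ 2) ∧
          (∑ i, ((b i : ℝ) - c i) ^ 2) ≤ μ / 4 + 2 * d) ∧
        (μ - d ≤ (∑ i, ((b i : ℝ) - a i) ^ 2) ∧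
          (∑ i, ((b i : ℝ) - a i) ^ 2) ≤ μ + d)}.ncard < 15 ^ d :=
  few_third_vertices_AC_general d hd μ a c hac
end

section
/- Let a, b ∈ ℤ^d with ‖b-a‖_2^2 ∈ [μ - d, μ + d], where μ = d(r^2-1)/6 and d is even. Then the number of half-lattice points c (i.e., points with c_i = a_i + (b_i-a_i)/2 + w_i/2 for integers w_i) satisfying both ‖c-a‖_2^2 ∈ [μ/4 - 2d, μ/4 + 2d] and ‖b-c‖_2^2 ∈ [μ/4 - 2d, μ/4 + 2d] is less than 15^d. -/
open Finset

/-- symmetric sum over `Icc (-B) B` of a function of `natAbs`. -/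
lemma icc_natAbs_sum (f : ℕ → ℝ) : ∀ B : ℕ,
    ∑ k ∈ Finset.Icc (-(B : ℤ)) (B : ℤ), f k.natAbs
      = f 0 + 2 * ∑ n ∈ Finset.range B, f (n + 1) := by
  intro B
  induction B with
  | zero => simp
  | succ B ih =>
    have hins : Finset.Icc (-(B + 1 : ℤ)) (B + 1 : ℤ)
        = insert (-(B + 1 : ℤ)) (insert ((B + 1 : ℤ)) (Finset.Icc (-(B : ℤ)) (B : ℤ))) := by
      ext x
      simp only [Finset.mem_Icc, Finset.mem_insert]
      omega
    have h1 : (-(B + 1 : ℤ)) ∉ insert ((B + 1 : ℤ)) (Finset.Icc (-(B : ℤ)) (B : ℤ)) := by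
      simp only [Finset.mem_insert, Finset.mem_Icc]
      omega
    have h2 : ((B + 1 : ℤ)) ∉ Finset.Icc (-(B : ℤ)) (B : ℤ) := by
      simp only [Finset.mem_Icc]; omega
    have hn1 : (-(B + 1 : ℤ)).natAbs = B + 1 := by omega
    have hn2 : ((B + 1 : ℤ)).natAbs = B + 1 := by omega
    push_cast
    push_cast at hins
    rw [hins, Finset.sum_insert h1, Finset.sum_insert h2]
    push_cast at ih
    rw [ih, Finset.sum_range_succ, hn1, hn2]
    ring

/-- tail bound for the theta series at `q = 9/10`. -/
lemma theta_tail (B : ℕ) :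
    ∑ n ∈ Finset.range B, (9 / 10 : ℝ) ^ ((n + 1) ^ 2)
      ≤ 9/10 + (9/10)^4 + (9/10)^9 + (9/10)^16 / (1 - (9/10)^7) := by
  set q : ℝ := 9/10 with hq
  have hq0 : (0:ℝ) ≤ q := by norm_num [hq]
  have hq1 : q ≤ 1 := by norm_num [hq]
  have hq7 : (0:ℝ) < 1 - q^7 := by norm_num [hq]
  rcases le_or_gt B 3 with hB | hB
  · -- small cases: bound each of at most 3 terms
    have htail : (0:ℝ) ≤ q^16 / (1 - q^7) := by positivity
    interval_cases B <;> simp_all <;> nlinarith [pow_nonneg hq0 4, pow_nonneg hq0 9,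
      pow_le_pow_of_le_one hq0 hq1 (by norm_num : 4 ≤ 9)]
  · rw [← Finset.sum_range_add_sum_Ico _ (le_of_lt hB)]
    have hhead : ∑ n ∈ Finset.range 3, q ^ ((n + 1) ^ 2) = q + q^4 + q^9 := by
      simp [Finset.sum_range_succ]
    rw [hhead]
    have htail : ∑ n ∈ Finset.Ico 3 B, q ^ ((n + 1) ^ 2) ≤ q^16 / (1 - q^7) := by
      rw [Finset.sum_Ico_eq_sum_range]
      have hterm : ∀ j ∈ Finset.range (B - 3), q ^ ((3 + j + 1) ^ 2) ≤ q^16 * (q^7)^j := by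
        intro j _
        rw [← pow_mul, ← pow_add]
        exact pow_le_pow_of_le_one hq0 hq1 (by nlinarith)
      calc ∑ j ∈ Finset.range (B - 3), q ^ ((3 + j + 1) ^ 2)
          ≤ ∑ j ∈ Finset.range (B - 3), q^16 * (q^7)^j := Finset.sum_le_sum hterm
        _ = q^16 * ∑ j ∈ Finset.range (B - 3), (q^7)^j := by rw [Finset.mul_sum]
        _ ≤ q^16 * (1 / (1 - q^7)) := by
            refine mul_le_mul_of_nonneg_left ?_ (by positivity)
            rw [geom_sum_eq (by norm_num [hq] : (q:ℝ)^7 ≠ 1)]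
            have hre : ((q^7)^(B-3) - 1)/(q^7 - 1) = (1 - (q^7)^(B-3))/(1 - q^7) := by
              rw [← neg_div_neg_eq]; ring_nf
            rw [hre, div_le_div_iff₀ hq7 hq7]
            have : (0:ℝ) ≤ (q^7)^(B-3) := by positivity
            nlinarith
        _ = q^16 / (1 - q^7) := by ring
    linarith

/-- counting integer points of small norm. -/
lemma count_small_norm (d B : ℕ) (hd : 1 ≤ d) :
    ((Fintype.piFinset fun _ : Fin d => Finset.Icc (-(B : ℤ)) (B : ℤ)).filter
      (fun w => ∑ i, (w i).natAbs ^ 2 ≤ 9 * d)).card < 15 ^ d := by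
  set q : ℝ := 9/10 with hq
  have hq0 : (0:ℝ) ≤ q := by norm_num [hq]
  have hq1 : q ≤ 1 := by norm_num [hq]
  set T := (Fintype.piFinset fun _ : Fin d => Finset.Icc (-(B : ℤ)) (B : ℤ)).filter
      (fun w => ∑ i, (w i).natAbs ^ 2 ≤ 9 * d) with hT
  set C : ℝ := 1 + 2 * (9/10 + (9/10)^4 + (9/10)^9 + (9/10)^16 / (1 - (9/10)^7)) with hC
  have key : (T.card : ℝ) * q ^ (9 * d) ≤ C ^ d := by
    calc (T.card : ℝ) * q ^ (9 * d)
        = ∑ _w ∈ T, q ^ (9 * d) := by rw [Finset.sum_const, nsmul_eq_mul]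
      _ ≤ ∑ w ∈ T, q ^ (∑ i, (w i).natAbs ^ 2) := by
          refine Finset.sum_le_sum fun w hw => ?_
          have := (Finset.mem_filter.mp hw).2
          exact pow_le_pow_of_le_one hq0 hq1 this
      _ ≤ ∑ w ∈ Fintype.piFinset (fun _ : Fin d => Finset.Icc (-(B : ℤ)) (B : ℤ)),
            q ^ (∑ i, (w i).natAbs ^ 2) := by
          refine Finset.sum_le_sum_of_subset_of_nonneg (Finset.filter_subset _ _)
            fun w _ _ => by positivity
      _ = ∑ w ∈ Fintype.piFinset (fun _ : Fin d => Finset.Icc (-(B : ℤ)) (B : ℤ)),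
            ∏ i, q ^ ((w i).natAbs ^ 2) := by
          refine Finset.sum_congr rfl fun w _ => ?_
          rw [Finset.prod_pow_eq_pow_sum]
      _ = ∏ _i : Fin d, ∑ k ∈ Finset.Icc (-(B : ℤ)) (B : ℤ), q ^ (k.natAbs ^ 2) := by
          rw [Finset.prod_univ_sum]
      _ = (∑ k ∈ Finset.Icc (-(B : ℤ)) (B : ℤ), q ^ (k.natAbs ^ 2)) ^ d := by
          rw [Finset.prod_const, Finset.card_univ, Fintype.card_fin]
      _ ≤ C ^ d := by
          refine pow_le_pow_left₀ (Finset.sum_nonneg fun k _ => by positivity) ?_ d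
          rw [icc_natAbs_sum (fun n => q ^ (n ^ 2)) B]
          have := theta_tail B
          simp only [hq] at this ⊢
          norm_num
          linarith
  have hClt : C < 15 * q ^ 9 := by rw [hC, hq]; norm_num
  have hC0 : (0:ℝ) ≤ C := by rw [hC]; norm_num
  have hpow : C ^ d < (15 * q ^ 9) ^ d :=
    pow_lt_pow_left₀ hClt hC0 (by omega)
  have hq9 : (0:ℝ) < q ^ (9 * d) := by positivity
  have : (T.card : ℝ) * q ^ (9 * d) < 15 ^ d * q ^ (9 * d) := by
    calc (T.card : ℝ) * q ^ (9 * d) ≤ C ^ d := key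
      _ < (15 * q ^ 9) ^ d := hpow
      _ = 15 ^ d * q ^ (9 * d) := by rw [mul_pow, ← pow_mul]
  have hfin : (T.card : ℝ) < 15 ^ d := lt_of_mul_lt_mul_right this (le_of_lt hq9)
  exact_mod_cast hfin

/-- Let `a, b ∈ ℤ^d` with `‖b-a‖₂² ∈ [μ - d, μ + d]`, where `μ = d(r²-1)/6` and `d` is
even. Then the number of half-lattice points `c`, i.e. points with
`c i = a i + (b i - a i)/2 + w i / 2` for integers `w i`, satisfying both
`‖c-a‖₂² ∈ [μ/4 - 2d, μ/4 + 2d]` and `‖b-c‖₂² ∈ [μ/4 - 2d, μ/4 + 2d]`,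
is less than `15^d`. -/
theorem few_half_lattice_midpoints (r d : ℕ) (hr : 0 < r) (hd : 2 ≤ d) (hde : Even d)
    (μ : ℝ) (hμ : μ = d * ((r : ℝ) ^ 2 - 1) / 6)
    (a b : Fin d → ℤ)
    (hab : μ - d ≤ (∑ i, ((b i : ℝ) - a i) ^ 2) ∧
           (∑ i, ((b i : ℝ) - a i) ^ 2) ≤ μ + d) :
    {c : Fin d → ℝ |
        (∃ w : Fin d → ℤ, ∀ i, c i = a i + ((b i : ℝ) - a i) / 2 + (w i : ℝ) / 2) ∧
        (μ / 4 - 2 * d ≤ (∑ i, (c i - a i) ^ 2) ∧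
          (∑ i, (c i - a i) ^ 2) ≤ μ / 4 + 2 * d) ∧
        (μ / 4 - 2 * d ≤ (∑ i, ((b i : ℝ) - c i) ^ 2) ∧
          (∑ i, ((b i : ℝ) - c i) ^ 2) ≤ μ / 4 + 2 * d)}.ncard < 15 ^ d := by
  classical
  set T := (Fintype.piFinset fun _ : Fin d => Finset.Icc (-(3 * d : ℤ)) (3 * d : ℤ)).filter
      (fun w => ∑ i, (w i).natAbs ^ 2 ≤ 9 * d) with hT
  set g : (Fin d → ℤ) → (Fin d → ℝ) :=
    fun w i => a i + ((b i : ℝ) - a i) / 2 + (w i : ℝ) / 2 with hg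
  have hginj : Function.Injective g := by
    intro w w' h
    funext i
    have := congrFun h i
    simp only [hg] at this
    have : (w i : ℝ) = w' i := by linarith
    exact_mod_cast this
  have hsub : {c : Fin d → ℝ |
        (∃ w : Fin d → ℤ, ∀ i, c i = a i + ((b i : ℝ) - a i) / 2 + (w i : ℝ) / 2) ∧
        (μ / 4 - 2 * d ≤ (∑ i, (c i - a i) ^ 2) ∧
          (∑ i, (c i - a i) ^ 2) ≤ μ / 4 + 2 * d) ∧
        (μ / 4 - 2 * d ≤ (∑ i, ((b i : ℝ) - c i) ^ 2) ∧
          (∑ i, ((b i : ℝ) - c i) ^ 2) ≤ μ / 4 + 2 * d)} ⊆ g '' ↑T := by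
    rintro c ⟨⟨w, hw⟩, ⟨hA1, hA2⟩, ⟨hB1, hB2⟩⟩
    have h1 : (∑ i, (c i - (a i : ℝ)) ^ 2) + (∑ i, ((b i : ℝ) - c i) ^ 2)
        = (∑ i, ((b i : ℝ) - a i) ^ 2) / 2 + (∑ i, ((w i : ℝ)) ^ 2) / 2 := by
      rw [Finset.sum_div, Finset.sum_div, ← Finset.sum_add_distrib, ← Finset.sum_add_distrib]
      refine Finset.sum_congr rfl fun i _ => ?_
      rw [hw i]; ring
    have h2 : (∑ i, ((w i : ℝ)) ^ 2) ≤ 9 * d := by linarith [hab.1]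
    have h3 : ((∑ i, (w i).natAbs ^ 2 : ℕ) : ℝ) = ∑ i, ((w i : ℝ)) ^ 2 := by
      push_cast
      refine Finset.sum_congr rfl fun i _ => ?_
      rw [Nat.cast_natAbs, Int.cast_abs, sq_abs]
    have h4 : ∑ i, (w i).natAbs ^ 2 ≤ 9 * d := by
      have : ((∑ i, (w i).natAbs ^ 2 : ℕ) : ℝ) ≤ ((9 * d : ℕ) : ℝ) := by
        rw [h3]; push_cast; linarith
      exact_mod_cast this
    have hbox : ∀ i, (w i).natAbs ≤ 3 * d := by
      intro i
      have hle : (w i).natAbs ^ 2 ≤ 9 * d :=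
        le_trans (Finset.single_le_sum (f := fun j => (w j).natAbs ^ 2) (fun j _ => Nat.zero_le _) (Finset.mem_univ i)) h4
      nlinarith [Nat.lt_or_ge ((w i).natAbs) (3 * d + 1)]
    refine ⟨w, ?_, ?_⟩
    · rw [hT]
      refine Finset.mem_filter.mpr ⟨?_, h4⟩
      refine Fintype.mem_piFinset.mpr fun i => ?_
      rw [Finset.mem_Icc]
      have := hbox i
      omega
    · funext i
      rw [hg, (hw i)]
  have hTfin : (g '' ↑T).Finite := (T.finite_toSet).image g
  calc {c : Fin d → ℝ |
        (∃ w : Fin d → ℤ, ∀ i, c i = a i + ((b i : ℝ) - a i) / 2 + (w i : ℝ) / 2) ∧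
        (μ / 4 - 2 * d ≤ (∑ i, (c i - a i) ^ 2) ∧
          (∑ i, (c i - a i) ^ 2) ≤ μ / 4 + 2 * d) ∧
        (μ / 4 - 2 * d ≤ (∑ i, ((b i : ℝ) - c i) ^ 2) ∧
          (∑ i, ((b i : ℝ) - c i) ^ 2) ≤ μ / 4 + 2 * d)}.ncard
      ≤ (g '' ↑T).ncard := Set.ncard_le_ncard hsub hTfin
    _ = (↑T : Set (Fin d → ℤ)).ncard := Set.ncard_image_of_injective _ hginj
    _ = T.card := Set.ncard_coe_finset T
    _ < 15 ^ d := count_small_norm d (3 * d) (by omega)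
end

section
/- Let X be a random variable on an n-dimensional product probability space that is C-Lipschitz, i.e., changing any single coordinate of the sample point changes X by at most C. Then for all t ≥ 0, Pr[|X - E[X]| > t] ≤ 2 exp(-t^2/(2 C^2 n)). -/
/-!
Split off the first coordinate, `ω = (x, y)`. For fixed `y` the section `x ↦ X (x, y)` takes
values in an interval of length `C`, so by Hoeffding's lemma `X - E[X | y]` is sub-Gaussian with
variance proxy `C² / 4` uniformly in `y`; the conditional mean `y ↦ E[X | y]` again has bounded
differences, now in `n - 1` coordinates. Integrating out `x` first shows that these variance
proxies add, so by induction `X - E X` is sub-Gaussian with variance proxy `n C² / 4`, and the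
Chernoff bound on both tails gives `2 exp (-2 t² / (n C²))`, which is stronger than the claim.
-/

open MeasureTheory ProbabilityTheory Real
open scoped NNReal

namespace ProbabilityTheory

variable {α β : Type*} [MeasurableSpace α] [MeasurableSpace β] {μ : Measure α} {ν : Measure β}

theorem hasSubgaussianMGF_sub_integral_of_abs_sub_le [IsProbabilityMeasure μ] {f : α → ℝ}
    (hf : AEMeasurable f μ) {C : ℝ≥0} (hC : ∀ x x', |f x - f x'| ≤ C) :
    HasSubgaussianMGF (fun x => f x - ∫ x', f x' ∂μ) ((C / 2) ^ 2) μ := by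
  obtain ⟨x₀⟩ := nonempty_of_isProbabilityMeasure μ
  have : Nonempty α := ⟨x₀⟩
  have hbdd : BddBelow (Set.range f) :=
    ⟨f x₀ - C, Set.forall_mem_range.2 fun x => by linarith [(abs_le.1 (hC x₀ x)).2]⟩
  have hmem : ∀ x, f x ∈ Set.Icc (⨅ x, f x) ((⨅ x, f x) + C) := fun x =>
    ⟨ciInf_le hbdd x, by
      have : f x - C ≤ ⨅ x, f x := le_ciInf fun x' => by linarith [(abs_le.1 (hC x x')).2]
      linarith⟩
  convert hasSubgaussianMGF_of_mem_Icc hf (ae_of_all _ hmem) using 3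
  ext; simp

theorem HasSubgaussianMGF.add_prod_of_section [SFinite μ] [SFinite ν] {a : α × β → ℝ}
    {b : β → ℝ} {c₁ c₂ : ℝ≥0} (ha : Measurable a)
    (h₁ : ∀ y, HasSubgaussianMGF (fun x => a (x, y)) c₁ μ) (h₂ : HasSubgaussianMGF b c₂ ν) :
    HasSubgaussianMGF (fun p => a p + b p.2) (c₁ + c₂) (μ.prod ν) := by
  have hsection : ∀ t y, ∫ x, exp (t * (a (x, y) + b y)) ∂μ
      = mgf (fun x => a (x, y)) μ t * exp (t * b y) := fun t y => by
    simp only [mul_add, exp_add, mgf, integral_mul_const]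
  have hsection_le : ∀ t y, mgf (fun x => a (x, y)) μ t * exp (t * b y)
      ≤ exp (c₁ * t ^ 2 / 2) * exp (t * b y) := fun t y =>
    mul_le_mul_of_nonneg_right ((h₁ y).mgf_le t) (exp_pos _).le
  have hint : ∀ t, Integrable (fun p => exp (t * (a p + b p.2))) (μ.prod ν) := by
    intro t
    have hmgf_meas : Measurable fun y => mgf (fun x => a (x, y)) μ t :=
      (by fun_prop : Measurable fun p => exp (t * a p)).stronglyMeasurable
        |>.integral_prod_left' |>.measurable
    refine (integrable_prod_iff' ?_).2 ⟨ae_of_all _ fun y => ?_, ?_⟩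
    · exact continuous_exp.comp_aestronglyMeasurable
        ((ha.aestronglyMeasurable.add h₂.aestronglyMeasurable.comp_snd).const_mul t)
    · simp only [mul_add, exp_add]
      exact ((h₁ y).integrable_exp_mul t).mul_const _
    · simp only [norm_of_nonneg (exp_pos _).le, hsection]
      refine ((h₂.integrable_exp_mul t).const_mul (exp (c₁ * t ^ 2 / 2))).mono' ?_
        (ae_of_all _ fun y => ?_)
      · exact hmgf_meas.aestronglyMeasurable.mul (h₂.integrable_exp_mul t).aestronglyMeasurable
      · rw [norm_of_nonneg (mul_nonneg mgf_nonneg (exp_pos _).le)]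
        exact hsection_le t y
  refine ⟨hint, fun t => ?_⟩
  calc mgf (fun p => a p + b p.2) (μ.prod ν) t
      = ∫ y, mgf (fun x => a (x, y)) μ t * exp (t * b y) ∂ν := by
        rw [mgf, integral_prod_symm _ (hint t)]
        simp only [hsection]
    _ ≤ ∫ y, exp (c₁ * t ^ 2 / 2) * exp (t * b y) ∂ν :=
        integral_mono_of_nonneg (ae_of_all _ fun y => mul_nonneg mgf_nonneg (exp_pos _).le)
          ((h₂.integrable_exp_mul t).const_mul _) (ae_of_all _ (hsection_le t))
    _ = exp (c₁ * t ^ 2 / 2) * mgf b ν t := integral_const_mul _ _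
    _ ≤ exp (c₁ * t ^ 2 / 2) * exp (c₂ * t ^ 2 / 2) := by
        gcongr
        exact h₂.mgf_le t
    _ = exp ((c₁ + c₂ : ℝ≥0) * t ^ 2 / 2) := by
        rw [← exp_add]; push_cast; ring_nf

theorem hasSubgaussianMGF_sub_integral_prod [SFinite μ] [SFinite ν] {f : α × β → ℝ}
    {c₁ c₂ : ℝ≥0} (hf : Measurable f) (hf_int : Integrable f (μ.prod ν))
    (h₁ : ∀ y, HasSubgaussianMGF (fun x => f (x, y) - ∫ x', f (x', y) ∂μ) c₁ μ)
    (h₂ : HasSubgaussianMGF (fun y => ∫ x, f (x, y) ∂μ - ∫ y', ∫ x, f (x, y') ∂μ ∂ν) c₂ ν) :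
    HasSubgaussianMGF (fun p => f p - ∫ q, f q ∂(μ.prod ν)) (c₁ + c₂) (μ.prod ν) := by
  have hmean : Measurable fun y => ∫ x, f (x, y) ∂μ :=
    hf.stronglyMeasurable.integral_prod_left'.measurable
  rw [integral_prod_symm f hf_int]
  convert h₂.add_prod_of_section (a := fun p => f p - ∫ x, f (x, p.2) ∂μ)
    (hf.sub (hmean.comp measurable_snd)) h₁ using 2
  ring

theorem HasSubgaussianMGF.measureReal_abs_ge_le [IsFiniteMeasure μ] {X : α → ℝ} {c : ℝ≥0}
    (h : HasSubgaussianMGF X c μ) {ε : ℝ} (hε : 0 ≤ ε) :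
    μ.real {ω | ε ≤ |X ω|} ≤ 2 * exp (-ε ^ 2 / (2 * c)) := by
  have hsplit : {ω | ε ≤ |X ω|} = {ω | ε ≤ X ω} ∪ {ω | ε ≤ (-X) ω} := by
    ext ω; simp [le_abs, le_neg]
  calc μ.real {ω | ε ≤ |X ω|} ≤ μ.real {ω | ε ≤ X ω} + μ.real {ω | ε ≤ (-X) ω} :=
        hsplit ▸ measureReal_union_le _ _
    _ ≤ exp (-ε ^ 2 / (2 * c)) + exp (-ε ^ 2 / (2 * c)) :=
        add_le_add (h.measure_ge_le hε) (h.neg.measure_ge_le hε)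
    _ = 2 * exp (-ε ^ 2 / (2 * c)) := by ring

end ProbabilityTheory

def HasBoundedDifferences {ι : Type*} {Ω : ι → Type*} (X : (∀ i, Ω i) → ℝ) (C : ℝ) : Prop :=
  ∀ ω ω' : ∀ i, Ω i, (∃ i, ∀ j, j ≠ i → ω j = ω' j) → |X ω - X ω'| ≤ C

namespace HasBoundedDifferences

section

variable {ι : Type*} {Ω : ι → Type*} {X : (∀ i, Ω i) → ℝ} {C : ℝ}

theorem abs_sub_le_card_mul (h : HasBoundedDifferences X C) (s : Finset ι)
    {ω ω' : ∀ i, Ω i} (hs : ∀ j ∉ s, ω j = ω' j) : |X ω - X ω'| ≤ s.card * C := by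
  classical
  induction s using Finset.induction generalizing ω with
  | empty => simp [funext fun j => hs j (Finset.notMem_empty j)]
  | @insert i s hi ih =>
    have hstep : |X ω - X (Function.update ω i (ω' i))| ≤ C :=
      h _ _ ⟨i, fun j hj => (Function.update_of_ne hj _ _).symm⟩
    have hrest : |X (Function.update ω i (ω' i)) - X ω'| ≤ s.card * C := by
      refine ih fun j hj => ?_
      rcases eq_or_ne j i with rfl | hji
      · exact Function.update_self ..
      · rw [Function.update_of_ne hji]
        exact hs j (by simp [hji, hj])
    calc |X ω - X ω'|
        ≤ |X ω - X (Function.update ω i (ω' i))| + |X (Function.update ω i (ω' i)) - X ω'| :=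
          abs_sub_le _ _ _
      _ ≤ (insert i s).card * C := by
          rw [Finset.card_insert_of_notMem hi]; push_cast; linarith

theorem integral {α : Type*} [MeasurableSpace α] {μ : Measure α} [IsProbabilityMeasure μ]
    {F : α → (∀ i, Ω i) → ℝ} (hF : ∀ x, HasBoundedDifferences (F x) C)
    (hint : ∀ ω, Integrable (fun x => F x ω) μ) :
    HasBoundedDifferences (fun ω => ∫ x, F x ω ∂μ) C := by
  intro ω ω' hωω'
  rw [← integral_sub (hint ω) (hint ω')]
  simpa using norm_integral_le_of_norm_le_const (μ := μ) (C := C)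
    (f := fun x => F x ω - F x ω') (ae_of_all _ fun x => hF x ω ω' hωω')

theorem exists_abs_le [Fintype ι] [Nonempty (∀ i, Ω i)] (h : HasBoundedDifferences X C) :
    ∃ B, ∀ ω, |X ω| ≤ B := by
  obtain ⟨ω₀⟩ := ‹Nonempty (∀ i, Ω i)›
  refine ⟨|X ω₀| + Fintype.card ι * C, fun ω => ?_⟩
  have := h.abs_sub_le_card_mul Finset.univ (ω := ω) (ω' := ω₀) (by simp)
  have := abs_sub_abs_le_abs_sub (X ω) (X ω₀)
  rw [Finset.card_univ] at *
  linarith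

end

section

variable {n : ℕ} {Ω : Fin (n + 1) → Type*} {X : (∀ i, Ω i) → ℝ} {C : ℝ}

theorem abs_sub_insertNth_le (h : HasBoundedDifferences X C) (p : Fin (n + 1)) (x x' : Ω p)
    (y : ∀ j, Ω (p.succAbove j)) : |X (p.insertNth x y) - X (p.insertNth x' y)| ≤ C := by
  refine h _ _ ⟨p, fun j hj => ?_⟩
  obtain ⟨k, rfl⟩ := Fin.exists_succAbove_eq hj
  simp only [Fin.insertNth_apply_succAbove]

theorem comp_insertNth (h : HasBoundedDifferences X C) (p : Fin (n + 1)) (x : Ω p) :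
    HasBoundedDifferences (fun y => X (p.insertNth x y)) C := by
  rintro y y' ⟨k, hk⟩
  refine h _ _ ⟨p.succAbove k, fun j hj => ?_⟩
  rcases eq_or_ne j p with rfl | hjp
  · simp only [Fin.insertNth_apply_same]
  · obtain ⟨l, rfl⟩ := Fin.exists_succAbove_eq hjp
    simp only [Fin.insertNth_apply_succAbove]
    exact hk l fun hlk => hj (hlk ▸ rfl)

end

theorem hasSubgaussianMGF {n : ℕ} {Ω : Fin n → Type*}
    [∀ i, MeasurableSpace (Ω i)] {P : ∀ i, Measure (Ω i)} [∀ i, IsProbabilityMeasure (P i)]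
    {X : (∀ i, Ω i) → ℝ} {C : ℝ≥0} (h : HasBoundedDifferences X C) (hX : Measurable X) :
    HasSubgaussianMGF (fun ω => X ω - ∫ ω', X ω' ∂Measure.pi P) (n * (C / 2) ^ 2)
      (Measure.pi P) := by
  induction n with
  | zero =>
    convert HasSubgaussianMGF.fun_zero (μ := Measure.pi P) using 1
    · ext ω
      rw [integral_unique, Subsingleton.elim ω default]
      simp
    · simp
  | succ n ih =>
    have hmp := measurePreserving_piFinSuccAbove P 0
    set e := MeasurableEquiv.piFinSuccAbove Ω 0
    -- `e.symm (x, y)` unfolds to `Fin.insertNth 0 x y`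
    set f : Ω 0 × (∀ j, Ω (Fin.succAbove 0 j)) → ℝ := fun p => X (e.symm p)
    have hf : Measurable f := hX.comp e.symm.measurable
    have := nonempty_of_isProbabilityMeasure (Measure.pi P)
    obtain ⟨B, hB⟩ := h.exists_abs_le
    have hf_int : Integrable f ((P 0).prod (Measure.pi fun j => P (Fin.succAbove 0 j))) :=
      .of_bound hf.aestronglyMeasurable B (ae_of_all _ fun p => hB _)
    have hsection_int : ∀ y, Integrable (fun x => f (x, y)) (P 0) := fun y =>
      .of_bound (hf.comp measurable_prodMk_right).aestronglyMeasurable B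
        (ae_of_all _ fun x => hB _)
    have hsub := hasSubgaussianMGF_sub_integral_prod hf hf_int
      (fun y => hasSubgaussianMGF_sub_integral_of_abs_sub_le
        (hf.comp measurable_prodMk_right).aemeasurable
        fun x x' => h.abs_sub_insertNth_le 0 x x' y)
      (ih (integral (fun x => h.comp_insertNth 0 x) hsection_int)
        hf.stronglyMeasurable.integral_prod_left'.measurable)
    rw [← hmp.integral_comp' f, ← hmp.map_eq] at hsub
    convert hsub.of_map hmp.measurable.aemeasurable using 1
    · ext ω
      simp only [Function.comp_apply, f, e.symm_apply_apply]
    · push_cast; ring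

end HasBoundedDifferences

theorem bounded_differences_inequality_general (n : ℕ)
    (Ω : Fin n → Type*) [∀ i, MeasurableSpace (Ω i)]
    (P : ∀ i, Measure (Ω i)) [∀ i, IsProbabilityMeasure (P i)]
    (C : ℝ) (hC : 0 < C)
    (X : (∀ i, Ω i) → ℝ) (hX : Measurable X)
    (hLip : ∀ ω ω' : ∀ i, Ω i, (∃ i, ∀ j, j ≠ i → ω j = ω' j) → |X ω - X ω'| ≤ C)
    (t : ℝ) (ht : 0 ≤ t) :
    Measure.pi P {ω | |X ω - ∫ ω', X ω' ∂(Measure.pi P)| > t}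
      ≤ ENNReal.ofReal (2 * Real.exp (-t ^ 2 / (2 * C ^ 2 * n))) := by
  lift C to ℝ≥0 using hC.le
  have hsubG := HasBoundedDifferences.hasSubgaussianMGF (P := P) hLip hX
  have hexponent : -t ^ 2 / (2 * ↑(n * (C / 2) ^ 2 : ℝ≥0)) = 4 * (-t ^ 2 / (2 * C ^ 2 * n)) := by
    push_cast; ring
  calc Measure.pi P {ω | |X ω - ∫ ω', X ω' ∂(Measure.pi P)| > t}
      ≤ Measure.pi P {ω | t ≤ |X ω - ∫ ω', X ω' ∂(Measure.pi P)|} :=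
        measure_mono fun ω (hω : t < _) => le_of_lt hω
    _ = ENNReal.ofReal ((Measure.pi P).real {ω | t ≤ |X ω - ∫ ω', X ω' ∂(Measure.pi P)|}) :=
        (ofReal_measureReal).symm
    _ ≤ ENNReal.ofReal (2 * exp (4 * (-t ^ 2 / (2 * C ^ 2 * n)))) := by
        rw [← hexponent]
        exact ENNReal.ofReal_le_ofReal (hsubG.measureReal_abs_ge_le ht)
    _ ≤ ENNReal.ofReal (2 * Real.exp (-t ^ 2 / (2 * C ^ 2 * n))) := by
        have : -t ^ 2 / (2 * C ^ 2 * n) ≤ 0 :=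
          div_nonpos_of_nonpos_of_nonneg (by nlinarith) (by positivity)
        gcongr
        linarith

/-- Hoeffding–Azuma / bounded differences inequality: if `X` is a `C`-Lipschitz
random variable on an `n`-dimensional product probability space (changing any single
coordinate changes `X` by at most `C`), then for all `t ≥ 0`,
`Pr[|X - E X| > t] ≤ 2 exp(-t²/(2 C² n))`. -/
theorem bounded_differences_inequality (n : ℕ) (hn : 0 < n)
    (Ω : Fin n → Type*) [∀ i, MeasurableSpace (Ω i)]
    (P : ∀ i, Measure (Ω i)) [∀ i, IsProbabilityMeasure (P i)]
    (C : ℝ) (hC : 0 < C)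
    (X : (∀ i, Ω i) → ℝ) (hX : Measurable X)
    (hLip : ∀ ω ω' : ∀ i, Ω i, (∃ i, ∀ j, j ≠ i → ω j = ω' j) → |X ω - X ω'| ≤ C)
    (t : ℝ) (ht : 0 ≤ t) :
    Measure.pi P {ω | |X ω - ∫ ω', X ω' ∂(Measure.pi P)| > t}
      ≤ ENNReal.ofReal (2 * Real.exp (-t ^ 2 / (2 * C ^ 2 * n))) :=
  bounded_differences_inequality_general n Ω P C hC X hX hLip t ht
end

section
/- Let a, b ∈ [r]^d be lattice points with ‖b-a‖_2^2 ∈ [μ - d, μ + d] where μ = d(r^2-1)/6, d = r^5, and r is a sufficiently large even integer. Then the number of points c ∈ {0,1,...,r+1}^d with ‖c-a‖_2^2 ∈ [μ/4 - 2d, μ/4 + 2d] and ‖b-c‖_2^2 ∈ [μ/4 - 2d, μ/4 + 2d] is at least 2^{d-1}. -/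
open Finset

private abbrev Ωd (d : ℕ) : Finset (Fin d → ℤ) :=
  Fintype.piFinset (fun _ : Fin d => ({-1, 1} : Finset ℤ))

private lemma card_Ωd (d : ℕ) : (Ωd d).card = 2 ^ d := by
  simp [Ωd, Fintype.card_piFinset]

private lemma sum_eps_mul_ne {d : ℕ} {i j : Fin d} (hij : i ≠ j) :
    ∑ ε ∈ Ωd d, ε i * ε j = 0 := by
  have h : ∀ ε : Fin d → ℤ, ε i * ε j =
      ∏ k, ((if k = i then ε k else 1) * (if k = j then ε k else 1)) := by
    intro ε
    rw [Finset.prod_mul_distrib]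
    simp
  calc ∑ ε ∈ Ωd d, ε i * ε j
      = ∑ ε ∈ Ωd d, ∏ k, ((if k = i then ε k else 1) * (if k = j then ε k else 1)) := by
        exact Finset.sum_congr rfl fun ε _ => h ε
    _ = ∏ k, ∑ x ∈ ({-1, 1} : Finset ℤ), ((if k = i then x else 1) * (if k = j then x else 1)) := by
        rw [Finset.prod_univ_sum]
    _ = 0 := by
        apply Finset.prod_eq_zero (Finset.mem_univ i)
        simp [if_neg hij, hij]

private lemma sum_eps_sq {d : ℕ} (v : Fin d → ℤ) :
    ∑ ε ∈ Ωd d, (∑ k, ε k * v k) ^ 2 = 2 ^ d * ∑ k, v k ^ 2 := by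
  have key : ∀ i j : Fin d, ∑ ε ∈ Ωd d, ε i * ε j = if i = j then 2 ^ d else 0 := by
    intro i j
    by_cases hij : i = j
    · subst hij
      have h1 : ∑ ε ∈ Ωd d, ε i * ε i = ∑ _ε ∈ Ωd d, (1 : ℤ) := by
        apply Finset.sum_congr rfl
        intro ε hε
        have h2 := Fintype.mem_piFinset.mp hε i
        simp only [Finset.mem_insert, Finset.mem_singleton] at h2
        rcases h2 with h | h <;> simp [h]
      rw [h1, Finset.sum_const, card_Ωd]
      simp
    · rw [if_neg hij]; exact sum_eps_mul_ne hij
  calc ∑ ε ∈ Ωd d, (∑ k, ε k * v k) ^ 2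
      = ∑ ε ∈ Ωd d, ∑ i, ∑ j, (ε i * ε j) * (v i * v j) := by
        apply Finset.sum_congr rfl
        intro ε _
        rw [sq, Finset.sum_mul_sum]
        apply Finset.sum_congr rfl; intro i _
        apply Finset.sum_congr rfl; intro j _
        ring
    _ = ∑ i, ∑ j, (∑ ε ∈ Ωd d, ε i * ε j) * (v i * v j) := by
        rw [Finset.sum_comm]
        apply Finset.sum_congr rfl; intro i _
        rw [Finset.sum_comm]
        apply Finset.sum_congr rfl; intro j _
        rw [Finset.sum_mul]
    _ = ∑ i, (2 ^ d : ℤ) * (v i * v i) := by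
        apply Finset.sum_congr rfl; intro i _
        rw [Finset.sum_eq_single i]
        · rw [key i i, if_pos rfl]
        · intro j _ hj; rw [key i j, if_neg (Ne.symm hj), zero_mul]
        · intro h; exact absurd (Finset.mem_univ i) h
    _ = 2 ^ d * ∑ k, v k ^ 2 := by
        rw [Finset.mul_sum]; apply Finset.sum_congr rfl; intro i _; ring

private lemma cheb {d : ℕ} (v : Fin d → ℤ) (s : ℤ) (hs : 0 ≤ s) :
    (((Ωd d).filter (fun ε => s < |∑ k, ε k * v k|)).card : ℤ) * s ^ 2
      ≤ 2 ^ d * ∑ k, v k ^ 2 := by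
  rw [← sum_eps_sq v]
  calc (((Ωd d).filter (fun ε => s < |∑ k, ε k * v k|)).card : ℤ) * s ^ 2
      = ∑ _ε ∈ (Ωd d).filter (fun ε => s < |∑ k, ε k * v k|), s ^ 2 := by
        rw [Finset.sum_const, nsmul_eq_mul]
    _ ≤ ∑ ε ∈ (Ωd d).filter (fun ε => s < |∑ k, ε k * v k|), (∑ k, ε k * v k) ^ 2 := by
        apply Finset.sum_le_sum
        intro ε hε
        have h := (Finset.mem_filter.mp hε).2
        calc s ^ 2 ≤ |∑ k, ε k * v k| ^ 2 := by
              apply pow_le_pow_left₀ hs h.le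
          _ = (∑ k, ε k * v k) ^ 2 := sq_abs _
    _ ≤ ∑ ε ∈ Ωd d, (∑ k, ε k * v k) ^ 2 :=
        Finset.sum_le_sum_of_subset_of_nonneg (Finset.filter_subset _ _)
          (fun _ _ _ => sq_nonneg _)

private def eta (x : ℤ) : ℤ := if Even x then 2 else 1

private lemma eta_cases (x : ℤ) : eta x = 1 ∨ eta x = 2 := by
  unfold eta; split <;> simp

private lemma eta_dvd {x ε : ℤ} (hε : ε = -1 ∨ ε = 1) : 2 ∣ (x + ε * eta x) := by
  unfold eta; split
  · rename_i h; obtain ⟨m, hm⟩ := h; rcases hε with h | h <;> subst h <;> omega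
  · rename_i h; rw [Int.not_even_iff_odd] at h
    obtain ⟨m, hm⟩ := h; rcases hε with h | h <;> subst h <;> omega
set_option maxHeartbeats 2000000 in
/-- Let `a, b ∈ [r]^d` with `‖b-a‖₂² ∈ [μ - d, μ + d]`, where `μ = d(r²-1)/6`,
`d = r⁵`, and `r` is a sufficiently large even integer (so that
`2 e^{-d/(15r²)} ≤ 1/2`). Then the number of `c ∈ {0,…,r+1}^d` with
`‖c-a‖₂² ∈ [μ/4 - 2d, μ/4 + 2d]` and `‖b-c‖₂² ∈ [μ/4 - 2d, μ/4 + 2d]`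
is at least `2^{d-1}`. -/
theorem many_third_vertices (r d : ℕ) (hre : Even r) (hr : 0 < r) (hd : d = r ^ 5)
    (hlarge : 2 * Real.exp (-(d : ℝ) / (15 * (r : ℝ) ^ 2)) ≤ 1 / 2)
    (μ : ℝ) (hμ : μ = d * ((r : ℝ) ^ 2 - 1) / 6)
    (a b : Fin d → ℤ)
    (ha : ∀ i, a i ∈ Finset.Icc (1 : ℤ) r) (hb : ∀ i, b i ∈ Finset.Icc (1 : ℤ) r)
    (hab : μ - d ≤ (∑ i, ((b i : ℝ) - a i) ^ 2) ∧
           (∑ i, ((b i : ℝ) - a i) ^ 2) ≤ μ + d) :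
    2 ^ (d - 1) ≤
      {c : Fin d → ℤ | (∀ i, c i ∈ Finset.Icc (0 : ℤ) (r + 1)) ∧
        (μ / 4 - 2 * d ≤ (∑ i, ((c i : ℝ) - a i) ^ 2) ∧
          (∑ i, ((c i : ℝ) - a i) ^ 2) ≤ μ / 4 + 2 * d) ∧
        (μ / 4 - 2 * d ≤ (∑ i, ((b i : ℝ) - c i) ^ 2) ∧
          (∑ i, ((b i : ℝ) - c i) ^ 2) ≤ μ / 4 + 2 * d)}.ncard := by
  have hr2 : 2 ≤ r := by
    obtain ⟨k, hk⟩ := hre; omega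
  have hd1 : 0 < d := by
    subst hd; positivity
  -- the sign vector data
  set v : Fin d → ℤ := fun k => eta (a k + b k) * (b k - a k) with hv
  set G : Finset (Fin d → ℤ) :=
    (Ωd d).filter (fun ε => ¬ (3 * (d : ℤ) < |∑ k, ε k * (2 * v k)|)) with hGdef
  set B : Finset (Fin d → ℤ) :=
    (Ωd d).filter (fun ε => 3 * (d : ℤ) < |∑ k, ε k * (2 * v k)|) with hBdef
  have hGB : B.card + G.card = 2 ^ d := by
    rw [hGdef, hBdef, Finset.card_filter_add_card_filter_not, card_Ωd]
  -- bound on the bad set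
  have hdR : (d : ℝ) = (r : ℝ) ^ 5 := by rw [hd]; push_cast; ring
  have hrR : (2 : ℝ) ≤ (r : ℝ) := by exact_mod_cast hr2
  have hBcard : B.card ≤ 2 ^ (d - 1) := by
    have hcheb : (B.card : ℤ) * (3 * (d : ℤ)) ^ 2 ≤ 2 ^ d * ∑ k, (2 * v k) ^ 2 := by
      rw [hBdef]
      convert cheb (fun k => 2 * v k) (3 * (d : ℤ)) (by positivity) using 2
    have hvsq : ∑ k, (2 * v k) ^ 2 ≤ ∑ k : Fin d, 16 * (b k - a k) ^ 2 := by
      apply Finset.sum_le_sum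
      intro k _
      rcases eta_cases (a k + b k) with h | h <;> simp only [hv, h] <;>
        nlinarith [sq_nonneg (b k - a k)]
    have hZ : (B.card : ℤ) * (3 * (d : ℤ)) ^ 2 ≤ 2 ^ d * ∑ k : Fin d, 16 * (b k - a k) ^ 2 := by
      refine le_trans hcheb ?_
      exact mul_le_mul_of_nonneg_left hvsq (by positivity)
    have hR : (B.card : ℝ) * (3 * (d : ℝ)) ^ 2 ≤ 2 ^ d * ∑ k : Fin d, 16 * ((b k : ℝ) - a k) ^ 2 := by
      exact_mod_cast hZ
    have hR2 : (B.card : ℝ) * (3 * (d : ℝ)) ^ 2 ≤ 2 ^ d * (16 * (μ + d)) := by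
      refine le_trans hR ?_
      have h16 : ∑ k : Fin d, 16 * ((b k : ℝ) - a k) ^ 2 = 16 * ∑ k, ((b k : ℝ) - a k) ^ 2 := by
        rw [Finset.mul_sum]
      rw [h16]
      have : 16 * ∑ k, ((b k : ℝ) - a k) ^ 2 ≤ 16 * (μ + d) := by linarith [hab.2]
      exact mul_le_mul_of_nonneg_left this (by positivity)
    have hkey : 16 * ((r : ℝ) ^ 2 + 5) ≤ 27 * (d : ℝ) := by
      rw [hdR]
      have h3 : (8 : ℝ) ≤ (r : ℝ) ^ 3 := by nlinarith [hrR]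
      have h4 : 8 * (r : ℝ) ^ 2 ≤ (r : ℝ) ^ 5 := by
        nlinarith [mul_nonneg (sq_nonneg (r : ℝ)) (by linarith : (0 : ℝ) ≤ (r : ℝ) ^ 3 - 8)]
      have h5 : (4 : ℝ) ≤ (r : ℝ) ^ 2 := by nlinarith [hrR]
      linarith
    have hd0 : (0 : ℝ) < (d : ℝ) := by exact_mod_cast hd1
    have hμd : 32 * (μ + (d : ℝ)) ≤ 9 * (d : ℝ) ^ 2 := by
      rw [hμ]
      nlinarith [mul_le_mul_of_nonneg_right hkey hd0.le]
    have hpow : (0 : ℝ) ≤ (2 : ℝ) ^ (d - 1) := by positivity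
    have h2d : (2 : ℝ) ^ d = 2 * 2 ^ (d - 1) := by
      rw [← pow_succ']; congr 1; omega
    have hq : (B.card : ℝ) * (9 * (d : ℝ) ^ 2) ≤ 2 ^ (d - 1) * (9 * (d : ℝ) ^ 2) := by
      calc (B.card : ℝ) * (9 * (d : ℝ) ^ 2) = (B.card : ℝ) * (3 * (d : ℝ)) ^ 2 := by ring
        _ ≤ 2 ^ d * (16 * (μ + d)) := hR2
        _ = 2 ^ (d - 1) * (32 * (μ + d)) := by rw [h2d]; ring
        _ ≤ 2 ^ (d - 1) * (9 * (d : ℝ) ^ 2) := mul_le_mul_of_nonneg_left hμd hpow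
    have hfinal : (B.card : ℝ) ≤ 2 ^ (d - 1) := le_of_mul_le_mul_right hq (by positivity)
    exact_mod_cast hfinal
  have hGcard : 2 ^ (d - 1) ≤ G.card := by
    have h2 : 2 ^ (d - 1) + 2 ^ (d - 1) = 2 ^ d := by
      rw [← two_mul, ← pow_succ']
      congr 1
      omega
    omega
  -- the construction
  set C : (Fin d → ℤ) → (Fin d → ℤ) :=
    fun ε k => (a k + b k + ε k * eta (a k + b k)) / 2 with hC
  have hmem : ∀ ε ∈ Ωd d, ∀ k, ε k = -1 ∨ ε k = 1 := by
    intro ε hε k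
    have := Fintype.mem_piFinset.mp hε k
    simpa using this
  have h2c : ∀ ε ∈ Ωd d, ∀ k, 2 * C ε k = a k + b k + ε k * eta (a k + b k) := by
    intro ε hε k
    exact Int.mul_ediv_cancel' (eta_dvd (hmem ε hε k))
  -- injectivity
  have hinj : Set.InjOn C ↑G := by
    intro ε hε ε' hε' hcc
    have hεΩ : ε ∈ Ωd d := Finset.mem_filter.mp hε |>.1
    have hε'Ω : ε' ∈ Ωd d := Finset.mem_filter.mp hε' |>.1
    funext k
    have h1 := h2c ε hεΩ k
    have h2 := h2c ε' hε'Ω k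
    rw [hcc] at h1
    have heta : eta (a k + b k) ≠ 0 := by rcases eta_cases (a k + b k) with h | h <;> omega
    have : ε k * eta (a k + b k) = ε' k * eta (a k + b k) := by omega
    exact mul_right_cancel₀ heta this
  -- membership of constructed points
  have hsub : ∀ ε ∈ G, C ε ∈
      {c : Fin d → ℤ | (∀ i, c i ∈ Finset.Icc (0 : ℤ) (r + 1)) ∧
        (μ / 4 - 2 * d ≤ (∑ i, ((c i : ℝ) - a i) ^ 2) ∧
          (∑ i, ((c i : ℝ) - a i) ^ 2) ≤ μ / 4 + 2 * d) ∧
        (μ / 4 - 2 * d ≤ (∑ i, ((b i : ℝ) - c i) ^ 2) ∧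
          (∑ i, ((b i : ℝ) - c i) ^ 2) ≤ μ / 4 + 2 * d)} := by
    intro ε hεG
    have hεΩ : ε ∈ Ωd d := (Finset.mem_filter.mp hεG).1
    have hgood : |∑ k, ε k * (2 * v k)| ≤ 3 * (d : ℤ) :=
      not_lt.mp (Finset.mem_filter.mp hεG).2
    have h2T : ∑ k, ε k * (2 * v k) = 2 * ∑ k, ε k * v k := by
      rw [Finset.mul_sum]
      exact Finset.sum_congr rfl fun k _ => by ring
    rw [h2T] at hgood
    obtain ⟨hT1, hT2⟩ := abs_le.mp hgood
    have hTr1 : -(3 * (d : ℝ)) ≤ 2 * ((∑ k, ε k * v k : ℤ) : ℝ) := by exact_mod_cast hT1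
    have hTr2 : 2 * ((∑ k, ε k * v k : ℤ) : ℝ) ≤ 3 * (d : ℝ) := by exact_mod_cast hT2
    -- pointwise cast identities
    have hca : ∀ k, (C ε k : ℝ) - a k
        = (((b k : ℝ) - a k) + (ε k : ℝ) * ((eta (a k + b k) : ℤ) : ℝ)) / 2 := by
      intro k
      have h := h2c ε hεΩ k
      have h' : (2 : ℝ) * (C ε k : ℝ)
          = (a k : ℝ) + (b k : ℝ) + (ε k : ℝ) * ((eta (a k + b k) : ℤ) : ℝ) := by
        exact_mod_cast congrArg (fun z : ℤ => (z : ℝ)) h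
      linarith
    have hbc : ∀ k, (b k : ℝ) - C ε k
        = (((b k : ℝ) - a k) - (ε k : ℝ) * ((eta (a k + b k) : ℤ) : ℝ)) / 2 := by
      intro k
      have h := hca k
      linarith
    have heps2 : ∀ k, ((ε k : ℤ) : ℝ) ^ 2 = 1 := by
      intro k
      rcases hmem ε hεΩ k with h | h <;> rw [h] <;> norm_num
    have hTcast : ((∑ k, ε k * v k : ℤ) : ℝ)
        = ∑ k, (ε k : ℝ) * (((eta (a k + b k) : ℤ) : ℝ) * ((b k : ℝ) - a k)) := by
      simp only [hv]
      push_cast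
      exact Finset.sum_congr rfl fun k _ => by ring
    -- the two sum identities
    have hSa : 4 * ∑ i, ((C ε i : ℝ) - a i) ^ 2
        = (∑ i, ((b i : ℝ) - a i) ^ 2) + 2 * ((∑ k, ε k * v k : ℤ) : ℝ)
          + ∑ i, ((eta (a i + b i) : ℤ) : ℝ) ^ 2 := by
      rw [hTcast, Finset.mul_sum, Finset.mul_sum, ← Finset.sum_add_distrib,
        ← Finset.sum_add_distrib]
      apply Finset.sum_congr rfl
      intro i _
      rw [hca i]
      linear_combination (((eta (a i + b i) : ℤ) : ℝ) ^ 2) * heps2 i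
    have hSb : 4 * ∑ i, ((b i : ℝ) - C ε i) ^ 2
        = (∑ i, ((b i : ℝ) - a i) ^ 2) - 2 * ((∑ k, ε k * v k : ℤ) : ℝ)
          + ∑ i, ((eta (a i + b i) : ℤ) : ℝ) ^ 2 := by
      rw [hTcast, Finset.mul_sum, Finset.mul_sum]
      rw [sub_eq_add_neg, ← Finset.sum_neg_distrib, ← Finset.sum_add_distrib,
        ← Finset.sum_add_distrib]
      apply Finset.sum_congr rfl
      intro i _
      rw [hbc i]
      linear_combination (((eta (a i + b i) : ℤ) : ℝ) ^ 2) * heps2 i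
    -- eta sum bounds
    have hη1 : (d : ℝ) ≤ ∑ i, ((eta (a i + b i) : ℤ) : ℝ) ^ 2 := by
      calc (d : ℝ) = ∑ _i : Fin d, (1 : ℝ) := by simp
        _ ≤ _ := Finset.sum_le_sum fun i _ => by
            rcases eta_cases (a i + b i) with h | h <;> rw [h] <;> norm_num
    have hη4 : ∑ i, ((eta (a i + b i) : ℤ) : ℝ) ^ 2 ≤ 4 * (d : ℝ) := by
      calc ∑ i, ((eta (a i + b i) : ℤ) : ℝ) ^ 2 ≤ ∑ _i : Fin d, (4 : ℝ) :=
            Finset.sum_le_sum fun i _ => by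
              rcases eta_cases (a i + b i) with h | h <;> rw [h] <;> norm_num
        _ = 4 * (d : ℝ) := by simp [mul_comm]
    refine ⟨?_, ⟨?_, ?_⟩, ?_, ?_⟩
    · intro k
      rw [Finset.mem_Icc]
      have h := h2c ε hεΩ k
      have haK := Finset.mem_Icc.mp (ha k)
      have hbK := Finset.mem_Icc.mp (hb k)
      rcases hmem ε hεΩ k with he | he <;> rcases eta_cases (a k + b k) with hh | hh <;>
        rw [he, hh] at h <;> constructor <;> omega
    · linarith [hab.1]
    · linarith [hab.2]
    · linarith [hab.1]
    · linarith [hab.2]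
  -- finiteness of the target set
  have hfin : {c : Fin d → ℤ | (∀ i, c i ∈ Finset.Icc (0 : ℤ) (r + 1)) ∧
        (μ / 4 - 2 * d ≤ (∑ i, ((c i : ℝ) - a i) ^ 2) ∧
          (∑ i, ((c i : ℝ) - a i) ^ 2) ≤ μ / 4 + 2 * d) ∧
        (μ / 4 - 2 * d ≤ (∑ i, ((b i : ℝ) - c i) ^ 2) ∧
          (∑ i, ((b i : ℝ) - c i) ^ 2) ≤ μ / 4 + 2 * d)}.Finite := by
    apply Set.Finite.subset
      (Finset.finite_toSet (Fintype.piFinset fun _ : Fin d => Finset.Icc (0 : ℤ) (r + 1)))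
    intro c hc
    simp only [Finset.coe_sort_coe, Finset.mem_coe, Fintype.mem_piFinset]
    exact hc.1
  calc (2 ^ (d - 1) : ℕ) ≤ G.card := hGcard
    _ = (G.image C).card := (Finset.card_image_of_injOn hinj).symm
    _ = (↑(G.image C) : Set (Fin d → ℤ)).ncard := (Set.ncard_coe_finset _).symm
    _ ≤ _ := by
        apply Set.ncard_le_ncard _ hfin
        intro c hc
        simp only [Finset.coe_image, Set.mem_image, Finset.mem_coe] at hc
        obtain ⟨ε, hε, rfl⟩ := hc
        exact hsub ε hε
end
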